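/- arXiv:1811.02153 — 2 statements merged into one kernel-verified Lean document; each statement's English description precedes it below -/
import Mathlib

section
/- Let t₁ < t₂ be real numbers and let p, q₁, q₂ : [t₁,t₂] → ℝ be continuous with p(t) > 0 for all t ∈ [t₁,t₂] and q₁(t) > q₂(t) for all t ∈ (t₁,t₂). Suppose there exists a nontrivial solution y of (p(t)y'(t))' + q₂(t)y(t) = 0 on (t₁,t₂) with y(t₁) = 0 = y(t₂). Then every real solution x of (p(t)x'(t))' + q₁(t)x(t) = 0 has at least one zero in the open interval (t₁,t₂). -/
/-! If `x` had no zero in `(t₁, t₂)`, pick consecutive zeros `a < b` of `y`; after replacing `y`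
by `-y` if necessary, `x y > 0` on `(a, b)`. The Wronskian `W = x (p y') - y (p x')` satisfies
`W' = (q₁ - q₂) x y > 0` there, yet `W a = p a · x a y'(a) ≥ 0 ≥ W b`: at a zero `a` of `y`,
`x a y'(a)` is the one-sided limit of `x t y t / (t - a)`. -/

open Set Filter Topology

/-- `x` is a solution of `(p(t) x'(t))' + q(t) x(t) = 0` on `[t₁, t₂]`:
`x` is continuously differentiable on `[t₁,t₂]`, `t ↦ p(t) x'(t)` is continuously
differentiable on `[t₁,t₂]`, and the equation holds for all `t ∈ [t₁,t₂]`. -/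
def IsODESolution (t₁ t₂ : ℝ) (p q x : ℝ → ℝ) : Prop :=
  ContDiffOn ℝ 1 x (Set.Icc t₁ t₂) ∧
  ContDiffOn ℝ 1 (fun t => p t * derivWithin x (Set.Icc t₁ t₂) t) (Set.Icc t₁ t₂) ∧
  ∀ t ∈ Set.Icc t₁ t₂,
    derivWithin (fun τ => p τ * derivWithin x (Set.Icc t₁ t₂) τ) (Set.Icc t₁ t₂) t
      + q t * x t = 0

lemma IsPreconnected.forall_pos_or_forall_neg {α : Type*} [TopologicalSpace α] {s : Set α}
    {f : α → ℝ} (hs : IsPreconnected s) (hf : ContinuousOn f s) (hne : ∀ t ∈ s, f t ≠ 0) :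
    (∀ t ∈ s, 0 < f t) ∨ (∀ t ∈ s, f t < 0) := by
  by_contra! ⟨⟨u, hu, hfu⟩, ⟨v, hv, hfv⟩⟩
  obtain ⟨c, hc, hfc⟩ := hs.intermediate_value hu hv hf ⟨hfu, hfv⟩
  exact hne c hc hfc

lemma exists_consecutive_zeros {f : ℝ → ℝ} {t₁ t₂ s : ℝ} (hf : ContinuousOn f (Icc t₁ t₂))
    (h₁ : f t₁ = 0) (h₂ : f t₂ = 0) (hs : s ∈ Icc t₁ t₂) (hfs : f s ≠ 0) :
    ∃ a b, t₁ ≤ a ∧ a < b ∧ b ≤ t₂ ∧ f a = 0 ∧ f b = 0 ∧ ∀ t ∈ Ioo a b, f t ≠ 0 := by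
  set Z := Icc t₁ t₂ ∩ f ⁻¹' {0}
  have hZ : IsClosed Z := hf.preimage_isClosed_of_isClosed isClosed_Icc isClosed_singleton
  have ha : sSup (Z ∩ Iic s) ∈ Z ∩ Iic s :=
    (hZ.inter isClosed_Iic).csSup_mem ⟨t₁, ⟨⟨le_rfl, hs.1.trans hs.2⟩, h₁⟩, hs.1⟩
      ⟨s, fun _ ht => ht.2⟩
  have hb : sInf (Z ∩ Ici s) ∈ Z ∩ Ici s :=
    (hZ.inter isClosed_Ici).csInf_mem ⟨t₂, ⟨⟨hs.1.trans hs.2, le_rfl⟩, h₂⟩, hs.2⟩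
      ⟨s, fun _ ht => ht.2⟩
  have has : sSup (Z ∩ Iic s) < s := ha.2.lt_of_ne fun h => hfs (h ▸ ha.1.2)
  have hsb : s < sInf (Z ∩ Ici s) := hb.2.lt_of_ne' fun h => hfs (h ▸ hb.1.2)
  refine ⟨_, _, ha.1.1.1, has.trans hsb, hb.1.1.2, ha.1.2, hb.1.2, fun t ht hft => ?_⟩
  have htZ : t ∈ Z := ⟨⟨ha.1.1.1.trans ht.1.le, ht.2.le.trans hb.1.1.2⟩, hft⟩
  rcases le_total t s with hts | hst
  · exact ht.1.not_ge (le_csSup ⟨s, fun _ h => h.2⟩ ⟨htZ, hts⟩)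
  · exact ht.2.not_ge (csInf_le ⟨s, fun _ h => h.2⟩ ⟨htZ, hst⟩)

lemma mul_deriv_nonneg_of_eq_zero_left {x y : ℝ → ℝ} {a b y' : ℝ} (hab : a < b)
    (hx : ContinuousWithinAt x (Ioo a b) a) (hy : HasDerivWithinAt y y' (Ioo a b) a)
    (hya : y a = 0) (hpos : ∀ t ∈ Ioo a b, 0 < x t * y t) : 0 ≤ x a * y' := by
  have hslope : Tendsto (fun t => x t * slope y a t) (𝓝[>] a) (𝓝 (x a * y')) := by
    rw [← nhdsWithin_Ioo_eq_nhdsGT hab]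
    refine hx.tendsto.mul ?_
    simpa using hasDerivWithinAt_iff_tendsto_slope.mp hy
  refine ge_of_tendsto hslope ?_
  filter_upwards [Ioo_mem_nhdsGT hab] with t ht
  rw [slope_def_field, hya, sub_zero, ← mul_div_assoc]
  exact (div_pos (hpos t ht) (sub_pos.2 ht.1)).le

lemma mul_deriv_nonpos_of_eq_zero_right {x y : ℝ → ℝ} {a b y' : ℝ} (hab : a < b)
    (hx : ContinuousWithinAt x (Ioo a b) b) (hy : HasDerivWithinAt y y' (Ioo a b) b)
    (hyb : y b = 0) (hpos : ∀ t ∈ Ioo a b, 0 < x t * y t) : x b * y' ≤ 0 := by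
  have hslope : Tendsto (fun t => x t * slope y b t) (𝓝[<] b) (𝓝 (x b * y')) := by
    rw [← nhdsWithin_Ioo_eq_nhdsLT hab]
    refine hx.tendsto.mul ?_
    simpa using hasDerivWithinAt_iff_tendsto_slope.mp hy
  refine le_of_tendsto hslope ?_
  filter_upwards [Ioo_mem_nhdsLT hab] with t ht
  rw [slope_def_field, hyb, sub_zero, ← mul_div_assoc]
  exact (div_neg_of_pos_of_neg (hpos t ht) (sub_neg.2 ht.2)).le

noncomputable def pWronskian (t₁ t₂ : ℝ) (p x y : ℝ → ℝ) (t : ℝ) : ℝ :=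
  x t * (p t * derivWithin y (Icc t₁ t₂) t) - y t * (p t * derivWithin x (Icc t₁ t₂) t)

namespace IsODESolution

variable {t₁ t₂ : ℝ} {p q q₁ q₂ x y : ℝ → ℝ}

lemma neg (hx : IsODESolution t₁ t₂ p q x) : IsODESolution t₁ t₂ p q (-x) := by
  obtain ⟨hx₁, hflux, hode⟩ := hx
  have hflux_neg : (fun t => p t * derivWithin (-x) (Icc t₁ t₂) t) =
      -fun t => p t * derivWithin x (Icc t₁ t₂) t := by
    ext t
    simp only [derivWithin.neg, mul_neg, Pi.neg_apply]
  refine ⟨hx₁.neg, hflux_neg ▸ hflux.neg, fun t ht => ?_⟩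
  rw [hflux_neg, derivWithin.neg, Pi.neg_apply, mul_neg, ← neg_add, hode t ht, neg_zero]

lemma hasDerivWithinAt (hx : IsODESolution t₁ t₂ p q x) {t : ℝ} (ht : t ∈ Icc t₁ t₂) :
    HasDerivWithinAt x (derivWithin x (Icc t₁ t₂) t) (Icc t₁ t₂) t :=
  (hx.1.differentiableOn one_ne_zero t ht).hasDerivWithinAt

lemma hasDerivAt (hx : IsODESolution t₁ t₂ p q x) {t : ℝ} (ht : t ∈ Ioo t₁ t₂) :
    HasDerivAt x (derivWithin x (Icc t₁ t₂) t) t :=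
  (hx.hasDerivWithinAt (Ioo_subset_Icc_self ht)).hasDerivAt (Icc_mem_nhds ht.1 ht.2)

lemma hasDerivAt_flux (hx : IsODESolution t₁ t₂ p q x) {t : ℝ} (ht : t ∈ Ioo t₁ t₂) :
    HasDerivAt (fun τ => p τ * derivWithin x (Icc t₁ t₂) τ) (-(q t * x t)) t := by
  have hdiff := (hx.2.1.differentiableOn one_ne_zero t (Ioo_subset_Icc_self ht)).hasDerivWithinAt
  rw [eq_neg_of_add_eq_zero_left (hx.2.2 t (Ioo_subset_Icc_self ht))] at hdiff
  exact hdiff.hasDerivAt (Icc_mem_nhds ht.1 ht.2)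

lemma continuousOn_pWronskian (hx : IsODESolution t₁ t₂ p q₁ x)
    (hy : IsODESolution t₁ t₂ p q₂ y) : ContinuousOn (pWronskian t₁ t₂ p x y) (Icc t₁ t₂) :=
  (hx.1.continuousOn.mul hy.2.1.continuousOn).sub (hy.1.continuousOn.mul hx.2.1.continuousOn)

lemma hasDerivAt_pWronskian (hx : IsODESolution t₁ t₂ p q₁ x)
    (hy : IsODESolution t₁ t₂ p q₂ y) {t : ℝ} (ht : t ∈ Ioo t₁ t₂) :
    HasDerivAt (pWronskian t₁ t₂ p x y) ((q₁ t - q₂ t) * (x t * y t)) t := by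
  refine (((hx.hasDerivAt ht).mul (hy.hasDerivAt_flux ht)).sub
    ((hy.hasDerivAt ht).mul (hx.hasDerivAt_flux ht))).congr_deriv ?_
  ring

lemma not_forall_mul_pos_of_zeros (hx : IsODESolution t₁ t₂ p q₁ x)
    (hy : IsODESolution t₁ t₂ p q₂ y) (hp : ∀ t ∈ Icc t₁ t₂, 0 ≤ p t)
    (hq : ∀ t ∈ Ioo t₁ t₂, q₂ t < q₁ t) {a b : ℝ} (ha : t₁ ≤ a) (hab : a < b) (hb : b ≤ t₂)
    (hya : y a = 0) (hyb : y b = 0) : ¬ ∀ t ∈ Ioo a b, 0 < x t * y t := by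
  intro hpos
  set W := pWronskian t₁ t₂ p x y
  have hIcc : Icc a b ⊆ Icc t₁ t₂ := Icc_subset_Icc ha hb
  have hIoo : Ioo a b ⊆ Icc t₁ t₂ := Ioo_subset_Icc_self.trans hIcc
  have haI : a ∈ Icc t₁ t₂ := hIcc (left_mem_Icc.2 hab.le)
  have hbI : b ∈ Icc t₁ t₂ := hIcc (right_mem_Icc.2 hab.le)
  have hWa : 0 ≤ W a := by
    have := mul_deriv_nonneg_of_eq_zero_left hab ((hx.1.continuousOn a haI).mono hIoo)
      ((hy.hasDerivWithinAt haI).mono hIoo) hya hpos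
    simp only [W, pWronskian, hya, zero_mul, sub_zero, mul_left_comm (x a)]
    exact mul_nonneg (hp a haI) this
  have hWb : W b ≤ 0 := by
    have := mul_deriv_nonpos_of_eq_zero_right hab ((hx.1.continuousOn b hbI).mono hIoo)
      ((hy.hasDerivWithinAt hbI).mono hIoo) hyb hpos
    simp only [W, pWronskian, hyb, zero_mul, sub_zero, mul_left_comm (x b)]
    exact mul_nonpos_of_nonneg_of_nonpos (hp b hbI) this
  obtain ⟨c, hc, hWc⟩ := exists_hasDerivAt_eq_slope W _ hab
    ((hx.continuousOn_pWronskian hy).mono hIcc)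
    fun t ht => hx.hasDerivAt_pWronskian hy (Ioo_subset_Ioo ha hb ht)
  have hW' : 0 < (q₁ c - q₂ c) * (x c * y c) :=
    mul_pos (sub_pos.2 (hq c (Ioo_subset_Ioo ha hb hc))) (hpos c hc)
  rw [hWc] at hW'
  exact hW'.not_ge (div_nonpos_of_nonpos_of_nonneg (by linarith) (sub_pos.2 hab).le)

end IsODESolution

theorem sturm_comparison_general
    (t₁ t₂ : ℝ) (p q₁ q₂ : ℝ → ℝ)
    (hppos : ∀ t ∈ Set.Icc t₁ t₂, 0 < p t)
    (hqq : ∀ t ∈ Set.Ioo t₁ t₂, q₂ t < q₁ t)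
    (y : ℝ → ℝ) (hy : IsODESolution t₁ t₂ p q₂ y)
    (hynt : ∃ t ∈ Set.Icc t₁ t₂, y t ≠ 0)
    (hy₁ : y t₁ = 0) (hy₂ : y t₂ = 0)
    (x : ℝ → ℝ) (hx : IsODESolution t₁ t₂ p q₁ x) :
    ∃ t ∈ Set.Ioo t₁ t₂, x t = 0 := by
  by_contra! hx0
  obtain ⟨s, hs, hys⟩ := hynt
  obtain ⟨a, b, ha, hab, hb, hya, hyb, hy0⟩ :=
    exists_consecutive_zeros hy.1.continuousOn hy₁ hy₂ hs hys
  have hIoo : Ioo a b ⊆ Ioo t₁ t₂ := Ioo_subset_Ioo ha hb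
  have hp_nonneg : ∀ t ∈ Icc t₁ t₂, 0 ≤ p t := fun t ht => (hppos t ht).le
  rcases isPreconnected_Ioo.forall_pos_or_forall_neg
    ((hx.1.continuousOn.mul hy.1.continuousOn).mono (hIoo.trans Ioo_subset_Icc_self))
    (fun t ht => mul_ne_zero (hx0 t (hIoo ht)) (hy0 t ht)) with hpos | hneg
  · exact hx.not_forall_mul_pos_of_zeros hy hp_nonneg hqq ha hab hb hya hyb hpos
  · refine hx.not_forall_mul_pos_of_zeros hy.neg hp_nonneg hqq ha hab hb
      (by simp [hya]) (by simp [hyb]) fun t ht => ?_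
    simpa using neg_pos.2 (hneg t ht)

/-- **Sturm's comparison theorem.** -/
theorem sturm_comparison
    (t₁ t₂ : ℝ) (ht : t₁ < t₂) (p q₁ q₂ : ℝ → ℝ)
    (hp : ContinuousOn p (Set.Icc t₁ t₂))
    (hq₁ : ContinuousOn q₁ (Set.Icc t₁ t₂))
    (hq₂ : ContinuousOn q₂ (Set.Icc t₁ t₂))
    (hppos : ∀ t ∈ Set.Icc t₁ t₂, 0 < p t)
    (hqq : ∀ t ∈ Set.Ioo t₁ t₂, q₂ t < q₁ t)
    (y : ℝ → ℝ) (hy : IsODESolution t₁ t₂ p q₂ y)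
    (hynt : ∃ t ∈ Set.Icc t₁ t₂, y t ≠ 0)
    (hy₁ : y t₁ = 0) (hy₂ : y t₂ = 0)
    (x : ℝ → ℝ) (hx : IsODESolution t₁ t₂ p q₁ x) :
    ∃ t ∈ Set.Ioo t₁ t₂, x t = 0 :=
  sturm_comparison_general t₁ t₂ p q₁ q₂ hppos hqq y hy hynt hy₁ hy₂ x hx
end

section
/- Let Ω ⊆ ℝᵐ be open, let M : Ω → ℝ^{m×m} be a differentiable matrix-valued function with M(x) symmetric for every x ∈ Ω, and let u, v : Ω → ℝ be twice differentiable with v(x) ≠ 0 for all x ∈ Ω. Then at every point of Ω the following Picone-type identity holds: Σ_{i,j} M_{ij} (v D_i(u/v))(v D_j(u/v)) + Σ_i D_i( u² (1/v) Σ_j M_{ij} D_j v ) = Σ_{i,j} M_{ij} D_i u D_j u + (u²/v) Σ_i D_i( Σ_j M_{ij} D_j v ). -/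
/-! With `t = u / v`, the quotient rule gives `v D_i(u/v) = D_i u - t D_i v`, and the product rule
expands `D_i(u² (1/v) g_i)`, where `g = M ∇v`, into `(2t D_i u - t² D_i v) g_i + (u²/v) D_i g_i`.
Expanding the quadratic form of `M` at `∇u - t ∇v`, the cross terms cancel by symmetry of `M`
and the `t²` terms cancel outright. -/

/-- The `i`-th partial derivative of `f : ℝᵐ → ℝ` at `x`. -/
noncomputable def pd {m : ℕ} (i : Fin m) (f : (Fin m → ℝ) → ℝ) (x : Fin m → ℝ) : ℝ :=
  fderiv ℝ f x (Pi.single i 1)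

section PartialDerivative

variable {m : ℕ} (i : Fin m) {f g : (Fin m → ℝ) → ℝ} {x : Fin m → ℝ}

lemma pd_mul (hf : DifferentiableAt ℝ f x) (hg : DifferentiableAt ℝ g x) :
    pd i (fun z => f z * g z) x = pd i f x * g x + f x * pd i g x := by
  simp only [pd, fderiv_fun_mul hf hg, add_apply, smul_apply, smul_eq_mul]
  ring

lemma pd_pow (n : ℕ) (hf : DifferentiableAt ℝ f x) :
    pd i (fun z => f z ^ n) x = n * f x ^ (n - 1) * pd i f x := by
  simp only [pd, fderiv_fun_pow n hf, nsmul_eq_mul, smul_apply, smul_eq_mul]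

lemma pd_inv (hf : DifferentiableAt ℝ f x) (hf0 : f x ≠ 0) :
    pd i (fun z => (f z)⁻¹) x = -pd i f x / f x ^ 2 := by
  have h := ((hasFDerivAt_inv hf0).comp x hf.hasFDerivAt).fderiv
  simp only [pd, Function.comp_def] at h ⊢
  simp only [h, ContinuousLinearMap.comp_apply, ContinuousLinearMap.toSpanSingleton_apply,
    smul_eq_mul]
  ring

lemma pd_div (hf : DifferentiableAt ℝ f x) (hg : DifferentiableAt ℝ g x) (hg0 : g x ≠ 0) :
    pd i (fun z => f z / g z) x = (pd i f x * g x - f x * pd i g x) / g x ^ 2 := by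
  simp only [div_eq_mul_inv]
  rw [pd_mul i hf (hg.fun_inv hg0), pd_inv i hg hg0]
  field_simp
  ring

lemma pd_sq_mul_one_div_mul {u v : (Fin m → ℝ) → ℝ} (hu : DifferentiableAt ℝ u x)
    (hv : DifferentiableAt ℝ v x) (hv0 : v x ≠ 0) (hg : DifferentiableAt ℝ g x) :
    pd i (fun z => u z ^ 2 * (1 / v z) * g z) x
      = (2 * (u x / v x) * pd i u x - (u x / v x) ^ 2 * pd i v x) * g x
        + u x ^ 2 / v x * pd i g x := by
  simp only [mul_one_div]
  rw [pd_mul i (by fun_prop (disch := exact hv0)) hg,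
    pd_div i (f := fun z => u z ^ 2) (hu.pow 2) hv hv0, pd_pow i 2 hu]
  field_simp
  ring

end PartialDerivative

lemma Matrix.IsSymm.quadratic_sub_mul_add {ι R : Type*} [Fintype ι] [CommRing R]
    {K : Matrix ι ι R} (hK : K.IsSymm) (a b : ι → R) (t : R) :
    ∑ i, ∑ j, K i j * (a i - t * b i) * (a j - t * b j)
        + ∑ i, (2 * t * a i - t ^ 2 * b i) * ∑ j, K i j * b j
      = ∑ i, ∑ j, K i j * a i * a j := by
  have hswap : ∑ i, ∑ j, K i j * b i * a j = ∑ i, ∑ j, K i j * a i * b j := by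
    rw [Finset.sum_comm]
    exact Finset.sum_congr rfl fun i _ => Finset.sum_congr rfl fun j _ => by
      rw [hK.apply i j]; ring
  have hexpand : ∑ i, ∑ j, K i j * (a i - t * b i) * (a j - t * b j)
        + ∑ i, (2 * t * a i - t ^ 2 * b i) * ∑ j, K i j * b j
      = ∑ i, ∑ j, K i j * a i * a j
        + t * (∑ i, ∑ j, K i j * a i * b j - ∑ i, ∑ j, K i j * b i * a j) := by
    simp only [Finset.mul_sum, ← Finset.sum_add_distrib, ← Finset.sum_sub_distrib]
    exact Finset.sum_congr rfl fun i _ => Finset.sum_congr rfl fun j _ => by ring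
  rw [hexpand, hswap, sub_self, mul_zero, add_zero]

theorem picone_identity_general {m : ℕ} (Ω : Set (Fin m → ℝ))
    (M : (Fin m → ℝ) → Matrix (Fin m) (Fin m) ℝ)
    (hMdiff : ∀ i j, ∀ x ∈ Ω, DifferentiableAt ℝ (fun z => M z i j) x)
    (hMsymm : ∀ x ∈ Ω, (M x).IsSymm)
    (u v : (Fin m → ℝ) → ℝ)
    (hu : ∀ x ∈ Ω, DifferentiableAt ℝ u x)
    (hv : ∀ x ∈ Ω, DifferentiableAt ℝ v x)
    (hv' : ∀ i, ∀ x ∈ Ω, DifferentiableAt ℝ (fun z => pd i v z) x)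
    (hvne : ∀ x ∈ Ω, v x ≠ 0) :
    ∀ x ∈ Ω,
      (∑ i, ∑ j, M x i j * (v x * pd i (fun z => u z / v z) x)
          * (v x * pd j (fun z => u z / v z) x))
        + (∑ i, pd i (fun z => (u z) ^ 2 * (1 / v z) * ∑ j, M z i j * pd j v z) x)
      = (∑ i, ∑ j, M x i j * pd i u x * pd j u x)
        + (u x) ^ 2 / v x * ∑ i, pd i (fun z => ∑ j, M z i j * pd j v z) x := by
  intro x hx
  have hv0 := hvne x hx
  have hquot (i : Fin m) : v x * pd i (fun z => u z / v z) x = pd i u x - u x / v x * pd i v x := by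
    rw [pd_div i (hu x hx) (hv x hx) hv0]
    field_simp
  have hMDv (i : Fin m) : DifferentiableAt ℝ (fun z => ∑ j, M z i j * pd j v z) x :=
    DifferentiableAt.fun_sum fun j _ => (hMdiff i j x hx).fun_mul (hv' j x hx)
  have hflux (i : Fin m) := pd_sq_mul_one_div_mul i (hu x hx) (hv x hx) hv0 (hMDv i)
  simp only [hquot, hflux, Finset.sum_add_distrib, ← Finset.mul_sum]
  linear_combination (hMsymm x hx).quadratic_sub_mul_add (fun i => pd i u x) (fun i => pd i v x)
    (u x / v x)

/-- **Picone-type identity.** For a symmetric differentiable matrix field `M`,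
twice differentiable `u, v` with `v ≠ 0` on an open set `Ω`, pointwise in `Ω`:
`Σ_{i,j} M_{ij} (v D_i(u/v))(v D_j(u/v)) + Σ_i D_i(u² (1/v) Σ_j M_{ij} D_j v)
  = Σ_{i,j} M_{ij} D_i u D_j u + (u²/v) Σ_i D_i(Σ_j M_{ij} D_j v)`. -/
theorem picone_identity {m : ℕ} (Ω : Set (Fin m → ℝ)) (hΩ : IsOpen Ω)
    (M : (Fin m → ℝ) → Matrix (Fin m) (Fin m) ℝ)
    (hMdiff : ∀ i j, ∀ x ∈ Ω, DifferentiableAt ℝ (fun z => M z i j) x)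
    (hMsymm : ∀ x ∈ Ω, (M x).IsSymm)
    (u v : (Fin m → ℝ) → ℝ)
    (hu : ∀ x ∈ Ω, DifferentiableAt ℝ u x)
    (hu' : ∀ i, ∀ x ∈ Ω, DifferentiableAt ℝ (fun z => pd i u z) x)
    (hv : ∀ x ∈ Ω, DifferentiableAt ℝ v x)
    (hv' : ∀ i, ∀ x ∈ Ω, DifferentiableAt ℝ (fun z => pd i v z) x)
    (hvne : ∀ x ∈ Ω, v x ≠ 0) :
    ∀ x ∈ Ω,
      (∑ i, ∑ j, M x i j * (v x * pd i (fun z => u z / v z) x)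
          * (v x * pd j (fun z => u z / v z) x))
        + (∑ i, pd i (fun z => (u z) ^ 2 * (1 / v z) * ∑ j, M z i j * pd j v z) x)
      = (∑ i, ∑ j, M x i j * pd i u x * pd j u x)
        + (u x) ^ 2 / v x * ∑ i, pd i (fun z => ∑ j, M z i j * pd j v z) x :=
  picone_identity_general Ω M hMdiff hMsymm u v hu hv hv' hvne
end
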